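/- Zero-sum minimax for the bias game: for the payoff f(w,a) = (wᵀa)², min over w in the simplex of max over a in the box Π[−τₖ,τₖ] of f(w,a) equals (min_k τₖ)². That is, the value of the sensor-fusion/data-injection game with squared-bias regret is the square of the smallest attack threshold. -/

import Mathlib

/-!
For a fixed weight vector `w ≥ 0`, the attacker's best reply is `a = τ`, since
`|∑ wₖ aₖ| ≤ ∑ wₖ |aₖ| ≤ ∑ wₖ τₖ`; so the inner maximum is `(∑ wₖ τₖ)²`. This is a linear
function of `w` squared, and on the simplex a linear function is minimised at a vertex, here the
one putting all weight on a smallest threshold.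
-/

open Finset

variable {ι : Type*} [Fintype ι]

theorem isGreatest_sq_weightedSum_box {w τ : ι → ℝ} (hw : ∀ k, 0 ≤ w k) (hτ : ∀ k, 0 ≤ τ k) :
    IsGreatest {y : ℝ | ∃ a : ι → ℝ, (∀ k, |a k| ≤ τ k) ∧ y = (∑ k, w k * a k) ^ 2}
      ((∑ k, w k * τ k) ^ 2) := by
  refine ⟨⟨τ, fun k => (abs_of_nonneg (hτ k)).le, rfl⟩, ?_⟩
  rintro y ⟨a, ha, rfl⟩
  have hbound : |∑ k, w k * a k| ≤ ∑ k, w k * τ k :=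
    calc |∑ k, w k * a k| ≤ ∑ k, |w k * a k| := abs_sum_le_sum_abs _ _
      _ ≤ ∑ k, w k * τ k := sum_le_sum fun k _ => by
          rw [abs_mul, abs_of_nonneg (hw k)]
          exact mul_le_mul_of_nonneg_left (ha k) (hw k)
  exact sq_le_sq' (abs_le.1 hbound).1 (abs_le.1 hbound).2

theorem isLeast_weightedSum_stdSimplex [Nonempty ι] (τ : ι → ℝ) :
    IsLeast ((fun w => ∑ k, w k * τ k) '' stdSimplex ℝ ι) (univ.inf' univ_nonempty τ) := by
  classical
  obtain ⟨k₀, -, hk₀⟩ := exists_mem_eq_inf' univ_nonempty τ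
  refine ⟨⟨Pi.single k₀ 1, single_mem_stdSimplex ℝ k₀, by simp [Pi.single_apply, ite_mul, hk₀]⟩, ?_⟩
  rintro _ ⟨w, ⟨hw0, hw1⟩, rfl⟩
  calc univ.inf' univ_nonempty τ = ∑ k, w k * univ.inf' univ_nonempty τ := by
        rw [← sum_mul, hw1, one_mul]
    _ ≤ ∑ k, w k * τ k :=
        sum_le_sum fun k _ => mul_le_mul_of_nonneg_left (inf'_le _ (mem_univ k)) (hw0 k)

/-- Zero-sum minimax value of the sensor-fusion/data-injection game with
squared-bias payoff: `min_w max_a (wᵀa)² = (min_k τₖ)²`. -/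
theorem minimax_bias_game (tau : Fin 4 → ℝ) (htau : ∀ k, 0 < tau k) :
    IsLeast {m : ℝ | ∃ w : Fin 4 → ℝ, (∀ k, 0 ≤ w k) ∧ (∑ k, w k = 1) ∧
        IsGreatest {y : ℝ | ∃ a : Fin 4 → ℝ, (∀ k, |a k| ≤ tau k) ∧
          y = (∑ k, w k * a k) ^ 2} m}
      ((Finset.univ.inf' Finset.univ_nonempty tau) ^ 2) := by
  have hbox {w : Fin 4 → ℝ} (hw : ∀ k, 0 ≤ w k) :=
    isGreatest_sq_weightedSum_box hw fun k => (htau k).le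
  have hmin := isLeast_weightedSum_stdSimplex tau
  have hmin_nonneg : 0 ≤ univ.inf' univ_nonempty tau := ((lt_inf'_iff _).2 fun k _ => htau k).le
  constructor
  · obtain ⟨w, ⟨hw0, hw1⟩, hwmin⟩ := hmin.1
    exact ⟨w, hw0, hw1, hwmin ▸ hbox hw0⟩
  · rintro m ⟨w, hw0, hw1, hm⟩
    rw [← (hbox hw0).unique hm]
    exact pow_le_pow_left₀ hmin_nonneg (hmin.2 ⟨w, ⟨hw0, hw1⟩, rfl⟩) 2
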